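/- Local Lipschitz estimate with singular weight for the regularized Newtonian force: there is a constant C depending only on d such that for all x, y in R^d with |y − x| < 2ε, one has |∇W^ε(x) − ∇W^ε(y)| ≤ q^ε(x)|x − y|, where q^ε(x) = C/|x|^d if |x| ≥ 3ε and q^ε(x) = C ε^{-d} if |x| < 3ε. -/

import Mathlib

/-! If `3 * ε ≤ ‖x‖`, the ball of radius `2 * ε` about `x` lies in `{‖z‖ ≥ ‖x‖ / 3} ∩ {‖z‖ > ε}`,
where the derivative of the force is bounded by `3 ^ d * Cd' / ‖x‖ ^ d`, and the mean value
inequality applies. Otherwise the force is even globally `Cd' * ε ^ (-d)`-Lipschitz: the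
derivative bounds give this on the open ball `‖z‖ < ε` and off the closed ball, continuity extends
it to the closed ball, and a segment crossing the sphere `‖z‖ = ε`, where no derivative is
available, is split there. -/

open Real Set AffineMap

theorem norm_image_sub_le_on_closure {E F : Type*} [SeminormedAddCommGroup E]
    [SeminormedAddCommGroup F] {f : E → F} {s : Set E} {K : ℝ} (hf : Continuous f)
    (h : ∀ u ∈ s, ∀ v ∈ s, ‖f u - f v‖ ≤ K * ‖u - v‖) :
    ∀ u ∈ closure s, ∀ v ∈ closure s, ‖f u - f v‖ ≤ K * ‖u - v‖ := by
  intro u hu v hv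
  have hclosed : IsClosed {p : E × E | ‖f p.1 - f p.2‖ ≤ K * ‖p.1 - p.2‖} :=
    isClosed_le (by fun_prop) (by fun_prop)
  have hprod := closure_minimal (s := s ×ˢ s) (fun p hp => h _ hp.1 _ hp.2) hclosed
  rw [closure_prod_eq] at hprod
  exact hprod (mk_mem_prod hu hv)

section MeanValue

variable {E F : Type*} [NormedAddCommGroup E] [NormedSpace ℝ E]
  [NormedAddCommGroup F] [NormedSpace ℝ F] {f : E → F} {f' : E → E →L[ℝ] F} {s : Set E} {K : ℝ}

theorem norm_image_lineMap_sub_le_of_notMem (hf : Continuous f)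
    (hder : ∀ z ∉ s, HasFDerivAt f (f' z) z) (hbd : ∀ z ∉ s, ‖f' z‖ ≤ K)
    {x y : E} {a : ℝ} (ha : 0 ≤ a) (hout : ∀ t ∈ Ico 0 a, lineMap x y t ∉ s) :
    ‖f (lineMap x y a) - f x‖ ≤ K * a * ‖y - x‖ := by
  have := norm_image_sub_le_of_norm_deriv_right_le_segment (f := f ∘ lineMap x y)
    (f' := fun t => f' (lineMap x y t) (y - x)) (C := K * ‖y - x‖)
    (hf.comp lineMap_continuous).continuousOn
    (fun t ht => ((hder _ (hout t ht)).comp_hasDerivAt t hasDerivAt_lineMap).hasDerivWithinAt)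
    (fun t ht => ((f' _).le_opNorm _).trans
      (mul_le_mul_of_nonneg_right (hbd _ (hout t ht)) (norm_nonneg _)))
    a ⟨ha, le_rfl⟩
  simpa only [Function.comp_apply, lineMap_apply_zero, sub_zero, mul_right_comm] using this

/-- With `a` and `b` the first and last times the segment from `x` to `y` spends in `s`, the
Lipschitz bound on `s` controls the piece `[a, b]` and the mean value inequality the two others. -/
theorem IsClosed.norm_image_sub_le_of_hasFDerivAt_compl (hs : IsClosed s)
    (hf : Continuous f) (hlip : ∀ u ∈ s, ∀ v ∈ s, ‖f u - f v‖ ≤ K * ‖u - v‖)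
    (hder : ∀ z ∉ s, HasFDerivAt f (f' z) z) (hbd : ∀ z ∉ s, ‖f' z‖ ≤ K) (x y : E) :
    ‖f y - f x‖ ≤ K * ‖y - x‖ := by
  set T := Icc (0 : ℝ) 1 ∩ lineMap x y ⁻¹' s
  have hT : IsCompact T := isCompact_Icc.inter_right (hs.preimage lineMap_continuous)
  rcases T.eq_empty_or_nonempty with hT0 | hTne
  · simpa using norm_image_lineMap_sub_le_of_notMem hf hder hbd zero_le_one
      fun t ht hts => hT0.subset ⟨Ico_subset_Icc_self ht, hts⟩
  set a := sInf T
  set b := sSup T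
  obtain ⟨⟨ha0, -⟩, has⟩ : a ∈ T := hT.sInf_mem hTne
  obtain ⟨⟨-, hb1⟩, hbs⟩ : b ∈ T := hT.sSup_mem hTne
  have hab : a ≤ b := csInf_le_csSup hTne hT.bddBelow hT.bddAbove
  have hfirst : ‖f (lineMap x y a) - f x‖ ≤ K * a * ‖y - x‖ :=
    norm_image_lineMap_sub_le_of_notMem hf hder hbd ha0 fun t ht hts =>
      (csInf_le hT.bddBelow ⟨⟨ht.1, by linarith [ht.2]⟩, hts⟩).not_gt ht.2
  have hlast : ‖f (lineMap y x (1 - b)) - f y‖ ≤ K * (1 - b) * ‖x - y‖ :=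
    norm_image_lineMap_sub_le_of_notMem hf hder hbd (by linarith) fun t ht hts => by
      rw [← lineMap_apply_one_sub] at hts
      exact (le_csSup hT.bddAbove ⟨⟨by linarith [ht.2], by linarith [ht.1]⟩, hts⟩).not_gt
        (by linarith [ht.2])
  rw [← lineMap_apply_one_sub, sub_sub_cancel, norm_sub_rev x y] at hlast
  have hmiddle := hlip _ hbs _ has
  rw [← dist_eq_norm (lineMap x y b), dist_lineMap_lineMap, dist_comm x, dist_eq_norm,
    dist_eq_norm, Real.norm_of_nonneg (sub_nonneg.2 hab)] at hmiddle
  calc ‖f y - f x‖ = ‖(f y - f (lineMap x y b)) + (f (lineMap x y b) - f (lineMap x y a))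
        + (f (lineMap x y a) - f x)‖ := by congr 1; abel
    _ ≤ ‖f (lineMap x y b) - f y‖ + ‖f (lineMap x y b) - f (lineMap x y a)‖
        + ‖f (lineMap x y a) - f x‖ := by
          rw [norm_sub_rev (f (lineMap x y b))]
          exact norm_add₃_le
    _ ≤ K * (1 - b) * ‖y - x‖ + K * ((b - a) * ‖y - x‖) + K * a * ‖y - x‖ := by gcongr
    _ = K * ‖y - x‖ := by ring

end MeanValue

section RegularizedForce

variable {E F : Type*} [NormedAddCommGroup E] [NormedSpace ℝ E]
  [NormedAddCommGroup F] [NormedSpace ℝ F] {d : ℕ} {ε K : ℝ}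

noncomputable def regularizedForce (d : ℕ) (ε Cd : ℝ) (x : E) : E :=
  if ε ≤ ‖x‖ then (Cd / ‖x‖ ^ d) • x else (Cd * ε ^ (-(d : ℝ))) • x

theorem regularizedForce_eq_max (hε : 0 < ε) (Cd : ℝ) (x : E) :
    regularizedForce d ε Cd x = (Cd / max ‖x‖ ε ^ d) • x := by
  unfold regularizedForce
  split_ifs with h
  · rw [max_eq_left h]
  · rw [max_eq_right (not_le.1 h).le, rpow_neg hε.le, rpow_natCast, div_eq_mul_inv]

theorem continuous_regularizedForce (hε : 0 < ε) (Cd : ℝ) :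
    Continuous (regularizedForce (E := E) d ε Cd) := by
  simp_rw [funext (regularizedForce_eq_max hε Cd)]
  exact (continuous_const.div (by fun_prop) fun x =>
    (pow_pos (hε.trans_le (le_max_right _ _)) d).ne').smul continuous_id

variable {f : E → F} {f' : E → E →L[ℝ] F}

theorem norm_image_sub_le_of_three_mul_le_norm (hε : 0 < ε) (hK : 0 ≤ K)
    (hder : ∀ z, ε < ‖z‖ → HasFDerivAt f (f' z) z) (hbd : ∀ z, ε ≤ ‖z‖ → ‖f' z‖ ≤ K / ‖z‖ ^ d)
    {x y : E} (hx : 3 * ε ≤ ‖x‖) (hxy : ‖y - x‖ < 2 * ε) :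
    ‖f x - f y‖ ≤ 3 ^ d * K / ‖x‖ ^ d * ‖x - y‖ := by
  have hball : ∀ z ∈ Metric.ball x (2 * ε), ‖x‖ / 3 ≤ ‖z‖ ∧ ε < ‖z‖ := by
    intro z hz
    rw [Metric.mem_ball, dist_eq_norm] at hz
    have := norm_sub_norm_le x z
    rw [norm_sub_rev] at this
    constructor <;> linarith
  have hbound : ∀ z ∈ Metric.ball x (2 * ε), ‖f' z‖ ≤ 3 ^ d * K / ‖x‖ ^ d := by
    intro z hz
    obtain ⟨hxz, hεz⟩ := hball z hz
    calc ‖f' z‖ ≤ K / ‖z‖ ^ d := hbd z hεz.le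
      _ ≤ K / (‖x‖ / 3) ^ d := by gcongr; exact pow_pos (by linarith) d
      _ = 3 ^ d * K / ‖x‖ ^ d := by rw [div_pow, div_div_eq_mul_div, mul_comm]
  exact (convex_ball x _).norm_image_sub_le_of_norm_hasFDerivWithin_le
    (fun z hz => (hder z (hball z hz).2).hasFDerivWithinAt) hbound
    (by rwa [Metric.mem_ball, dist_eq_norm]) (Metric.mem_ball_self (by positivity))

theorem norm_image_sub_le_of_regularized_fderiv_bounds (hε : 0 < ε) (hK : 0 ≤ K) (hf : Continuous f)
    (hder : ∀ z, ‖z‖ ≠ ε → HasFDerivAt f (f' z) z)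
    (hbd_out : ∀ z, ε ≤ ‖z‖ → ‖f' z‖ ≤ K / ‖z‖ ^ d)
    (hbd_in : ∀ z, ‖z‖ < ε → ‖f' z‖ ≤ K * ε ^ (-(d : ℝ))) (x y : E) :
    ‖f x - f y‖ ≤ K * ε ^ (-(d : ℝ)) * ‖x - y‖ := by
  have hball : IsClosed (Metric.closedBall (0 : E) ε) := Metric.isClosed_closedBall
  refine hball.norm_image_sub_le_of_hasFDerivAt_compl hf ?_ (fun z hz => hder z ?_)
    (fun z hz => ?_) y x
  · rw [← closure_ball (0 : E) hε.ne']
    refine norm_image_sub_le_on_closure hf fun u hu v hv => ?_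
    exact (convex_ball (0 : E) ε).norm_image_sub_le_of_norm_hasFDerivWithin_le
      (fun z hz => (hder z (mem_ball_zero_iff.1 hz).ne).hasFDerivWithinAt)
      (fun z hz => hbd_in z (mem_ball_zero_iff.1 hz)) hv hu
  · exact (not_le.1 (mt mem_closedBall_zero_iff.2 hz)).ne'
  · have hεz : ε < ‖z‖ := not_le.1 (mt mem_closedBall_zero_iff.2 hz)
    calc ‖f' z‖ ≤ K / ‖z‖ ^ d := hbd_out z hεz.le
      _ ≤ K / ε ^ d := by gcongr
      _ = K * ε ^ (-(d : ℝ)) := by rw [rpow_neg hε.le, rpow_natCast, div_eq_mul_inv]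

end RegularizedForce

theorem regularized_force_local_lipschitz_general (d : ℕ) (ε Cd Cd' : ℝ)
    (hε : 0 < ε) (hCd' : 0 < Cd')
    (W : EuclideanSpace ℝ (Fin d) → EuclideanSpace ℝ (Fin d))
    (hW : ∀ x, W x = if ε ≤ ‖x‖ then (Cd / ‖x‖ ^ d) • x else (Cd * ε ^ (-(d : ℝ))) • x)
    (W' : EuclideanSpace ℝ (Fin d) → EuclideanSpace ℝ (Fin d) →L[ℝ] EuclideanSpace ℝ (Fin d))
    (hdiff : ∀ z, ‖z‖ ≠ ε → HasFDerivAt W (W' z) z)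
    (hbound1 : ∀ z, ε ≤ ‖z‖ → ‖W' z‖ ≤ Cd' / ‖z‖ ^ d)
    (hbound2 : ∀ z, ‖z‖ < ε → ‖W' z‖ ≤ Cd' * ε ^ (-(d : ℝ))) :
    ∃ C : ℝ, 0 < C ∧ ∀ x y : EuclideanSpace ℝ (Fin d), ‖y - x‖ < 2 * ε →
      ‖W x - W y‖ ≤ (if 3 * ε ≤ ‖x‖ then C / ‖x‖ ^ d else C * ε ^ (-(d : ℝ))) * ‖x - y‖ := by
  have hWc : Continuous W := by
    rw [show W = regularizedForce d ε Cd from funext hW]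
    exact continuous_regularizedForce hε Cd
  refine ⟨3 ^ d * Cd', by positivity, fun x y hxy => ?_⟩
  split_ifs with hx
  · exact norm_image_sub_le_of_three_mul_le_norm hε hCd'.le (fun z hz => hdiff z hz.ne') hbound1
      hx hxy
  · calc ‖W x - W y‖ ≤ Cd' * ε ^ (-(d : ℝ)) * ‖x - y‖ :=
          norm_image_sub_le_of_regularized_fderiv_bounds hε hCd'.le hWc hdiff hbound1 hbound2 x y
      _ ≤ 3 ^ d * Cd' * ε ^ (-(d : ℝ)) * ‖x - y‖ := by
          rw [mul_assoc (3 ^ d : ℝ), mul_assoc (3 ^ d : ℝ)]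
          exact le_mul_of_one_le_left (by positivity) (one_le_pow₀ (by norm_num))

theorem regularized_force_local_lipschitz (d : ℕ) (hd : 2 ≤ d) (ε Cd Cd' : ℝ)
    (hε : 0 < ε) (hCd : 0 < Cd) (hCd' : 0 < Cd')
    (W : EuclideanSpace ℝ (Fin d) → EuclideanSpace ℝ (Fin d))
    (hW : ∀ x, W x = if ε ≤ ‖x‖ then (Cd / ‖x‖ ^ d) • x else (Cd * ε ^ (-(d : ℝ))) • x)
    (W' : EuclideanSpace ℝ (Fin d) → EuclideanSpace ℝ (Fin d) →L[ℝ] EuclideanSpace ℝ (Fin d))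
    (hdiff : ∀ z, ‖z‖ ≠ ε → HasFDerivAt W (W' z) z)
    (hbound1 : ∀ z, ε ≤ ‖z‖ → ‖W' z‖ ≤ Cd' / ‖z‖ ^ d)
    (hbound2 : ∀ z, ‖z‖ < ε → ‖W' z‖ ≤ Cd' * ε ^ (-(d : ℝ))) :
    ∃ C : ℝ, 0 < C ∧ ∀ x y : EuclideanSpace ℝ (Fin d), ‖y - x‖ < 2 * ε →
      ‖W x - W y‖ ≤ (if 3 * ε ≤ ‖x‖ then C / ‖x‖ ^ d else C * ε ^ (-(d : ℝ))) * ‖x - y‖ :=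
  regularized_force_local_lipschitz_general d ε Cd Cd' hε hCd' W hW W' hdiff hbound1 hbound2
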